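/- arXiv:cs/0507025 — 2 statements merged into one kernel-verified Lean document; each statement's English description precedes it below -/
import Mathlib

section
/- Consider the interleaved two-value configuration: n is an even positive integer, x_0 and x_1 are two points, the n particles are ξ_i = x_0 for odd i and ξ_i = x_1 for even i, with weights ω_i = 2(1−ω)/n for odd i and ω_i = 2ω/n for even i, where 1/2 ≤ ω < 1, and f is a real-valued function on {x_0, x_1}. Let D_ω^inv(u) = i for u ∈ ( Σ_{j=1}^{i−1} ω_j , Σ_{j=1}^{i} ω_j ], let U be uniform on (0, 1/n], and set U^i = (i−1)/n + U (systematic resampling). Then Var[ (1/n) Σ_{i=1}^n f(ξ_{D_ω^inv(U^i)}) ] = (ω − 1/2)(1 − ω) (f(x_1) − f(x_0))², a quantity that does not depend on n. -/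
/-!
Scale by `n` and write `V = n U`, uniform on `(0, 1]`. The scaled cumulative weights bound the
interval `(i, i + 2(1 - ω)]` for an even index `i` and `(i + 1 - 2ω, i + 1]` for an odd one, so the
point `i + V` selects `i` itself when `i` is odd, and when `i` is even it selects `i` if
`V ≤ 2(1 - ω)` and `i + 1` otherwise. The estimator is therefore the two-point variable equal to
`(f x0 + f x1) / 2` with probability `p = 2(1 - ω)` and to `f x1` otherwise, whose variance is
`p (1 - p) ((f x1 - f x0) / 2)²`.
-/

open MeasureTheory ProbabilityTheory Finset

section TwoPoint

variable {Ω : Type*} [MeasurableSpace Ω] {P : Measure Ω} [IsProbabilityMeasure P]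

lemma integral_ite_mem {s : Set Ω} [DecidablePred (· ∈ s)] (hs : MeasurableSet s) (b c : ℝ) :
    ∫ a, (if a ∈ s then b else c) ∂P = P.real s * b + (1 - P.real s) * c := by
  rw [← probReal_compl_eq_one_sub hs, ← smul_eq_mul, ← smul_eq_mul, ← setIntegral_const,
    ← setIntegral_const]
  exact integral_piecewise hs integrableOn_const integrableOn_const

lemma variance_ite_mem {s : Set Ω} [DecidablePred (· ∈ s)] (hs : MeasurableSet s) (b c : ℝ) :
    Var[fun a => if a ∈ s then b else c; P] = P.real s * (1 - P.real s) * (b - c) ^ 2 := by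
  have hmeas : Measurable fun a => if a ∈ s then b else c :=
    Measurable.ite hs measurable_const measurable_const
  have hmem : MemLp (fun a => if a ∈ s then b else c) 2 P :=
    MemLp.of_bound hmeas.aestronglyMeasurable (|b| + |c|) <| ae_of_all _ fun a => by
      split_ifs <;> simp [abs_nonneg]
  have hsq : (fun a => if a ∈ s then b else c) ^ 2 = fun a => if a ∈ s then b ^ 2 else c ^ 2 := by
    ext a; split_ifs <;> simp [*]
  rw [variance_eq_sub hmem, hsq, integral_ite_mem hs, integral_ite_mem hs]
  ring

end TwoPoint

lemma ae_mem_Ioc_of_map_eq {Ω : Type*} [MeasurableSpace Ω] {P : Measure Ω} {U : Ω → ℝ}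
    (hU : Measurable U) {n : ℕ}
    (hlaw : P.map U = (n : ENNReal) • volume.restrict (Set.Ioc (0 : ℝ) (1 / n))) :
    ∀ᵐ a ∂P, U a ∈ Set.Ioc (0 : ℝ) (1 / n) := by
  refine ae_of_ae_map hU.aemeasurable ?_
  rw [hlaw]
  exact Measure.ae_smul_measure (ae_restrict_mem measurableSet_Ioc) _

lemma measureReal_setOf_le_of_map_eq {Ω : Type*} [MeasurableSpace Ω] {P : Measure Ω} {U : Ω → ℝ}
    (hU : Measurable U) {n : ℕ}
    (hlaw : P.map U = (n : ENNReal) • volume.restrict (Set.Ioc (0 : ℝ) (1 / n)))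
    {t : ℝ} (ht0 : 0 ≤ t) (ht : t ≤ 1 / n) :
    P.real {a | U a ≤ t} = n * t := by
  rw [show {a | U a ≤ t} = U ⁻¹' Set.Iic t from rfl, ← map_measureReal_apply hU measurableSet_Iic,
    hlaw, measureReal_ennreal_smul_apply, measureReal_restrict_apply measurableSet_Iic,
    Set.Iic_inter_Ioc_of_le ht, Real.volume_real_Ioc_of_le ht0]
  simp

lemma sum_range_two_mul_ite_mod_two {M : Type*} [AddCommMonoid M] (a b : M) (m : ℕ) :
    ∑ j ∈ range (2 * m), (if j % 2 = 0 then a else b) = m • (a + b) := by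
  induction m with
  | zero => simp
  | succ k ih =>
    rw [Nat.mul_succ, sum_range_succ, sum_range_succ, ih, succ_nsmul]
    simp [Nat.add_mod, add_assoc]

lemma sum_Iio_fin_eq_sum_range {M : Type*} [AddCommMonoid M] {n : ℕ} (g : ℕ → M) (i : Fin n) :
    ∑ j ∈ Iio i, g j = ∑ j ∈ range i, g j := by
  rw [← Nat.Iio_eq_range, ← Fin.map_valEmbedding_Iio, sum_map]
  rfl

lemma average_ite_mod_two {n : ℕ} (hn : 0 < n) (hne : Even n) (a b : ℝ) :
    (1 / n : ℝ) * ∑ i : Fin n, (if (i : ℕ) % 2 = 0 then a else b) = (a + b) / 2 := by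
  obtain ⟨m, rfl⟩ := hne
  rw [Fin.sum_univ_eq_sum_range (fun k => if k % 2 = 0 then a else b), ← two_mul,
    sum_range_two_mul_ite_mod_two, nsmul_eq_mul]
  have : (m : ℝ) ≠ 0 := by norm_cast; omega
  push_cast
  field_simp

section Interleaved

variable {n : ℕ} {ω : ℝ} {w : Fin n → ℝ}

lemma sum_Iio_interleaved
    (hw : ∀ i, w i = if (i : ℕ) % 2 = 0 then 2 * (1 - ω) / n else 2 * ω / n) (i : Fin n) :
    ∑ j ∈ Iio i, w j = (if (i : ℕ) % 2 = 0 then (i : ℝ) else i + 1 - 2 * ω) / n := by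
  simp_rw [hw]
  rw [sum_Iio_fin_eq_sum_range (fun k => if k % 2 = 0 then 2 * (1 - ω) / n else 2 * ω / n)]
  obtain ⟨m, hm | hm⟩ := Nat.even_or_odd' (i : ℕ) <;> rw [hm]
  · rw [sum_range_two_mul_ite_mod_two, nsmul_eq_mul, if_pos (by omega)]
    push_cast; ring
  · rw [sum_range_succ, sum_range_two_mul_ite_mod_two, nsmul_eq_mul, if_pos (by omega),
      if_neg (by omega)]
    push_cast; ring

lemma sum_Iic_interleaved
    (hw : ∀ i, w i = if (i : ℕ) % 2 = 0 then 2 * (1 - ω) / n else 2 * ω / n) (i : Fin n) :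
    ∑ j ∈ Iic i, w j
      = (if (i : ℕ) % 2 = 0 then (i : ℝ) + 2 - 2 * ω else i + 1) / n := by
  rw [← Iio_insert, sum_insert (by simp), sum_Iio_interleaved hw, hw]
  split_ifs <;> ring


lemma inverseCDF_div_eq_interleaved {Dinv : ℝ → Fin n} (hn : 0 < n)
    (hw : ∀ i, w i = if (i : ℕ) % 2 = 0 then 2 * (1 - ω) / n else 2 * ω / n)
    (hD : ∀ (u : ℝ) (i : Fin n),
      u ∈ Set.Ioc (∑ j ∈ Iio i, w j) (∑ j ∈ Iic i, w j) → Dinv u = i)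
    {v : ℝ} (j : Fin n)
    (h1 : (if (j : ℕ) % 2 = 0 then (j : ℝ) else j + 1 - 2 * ω) < v)
    (h2 : v ≤ if (j : ℕ) % 2 = 0 then (j : ℝ) + 2 - 2 * ω else j + 1) :
    Dinv (v / n) = j := by
  have hn' : (0 : ℝ) < n := by exact_mod_cast hn
  exact hD _ j ⟨by rwa [sum_Iio_interleaved hw, div_lt_div_iff_of_pos_right hn'],
    by rwa [sum_Iic_interleaved hw, div_le_div_iff_of_pos_right hn']⟩

lemma selected_particle_interleaved {X : Type*} {x0 x1 : X} {ξ : Fin n → X} {Dinv : ℝ → Fin n}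
    (hn : 0 < n) (hne : Even n) (hω : 1 / 2 ≤ ω)
    (hξ : ∀ i, ξ i = if (i : ℕ) % 2 = 0 then x0 else x1)
    (hw : ∀ i, w i = if (i : ℕ) % 2 = 0 then 2 * (1 - ω) / n else 2 * ω / n)
    (hD : ∀ (u : ℝ) (i : Fin n),
      u ∈ Set.Ioc (∑ j ∈ Iio i, w j) (∑ j ∈ Iic i, w j) → Dinv u = i)
    {u : ℝ} (hu : u ∈ Set.Ioc (0 : ℝ) (1 / n)) (i : Fin n) :
    ξ (Dinv ((i : ℝ) / n + u)) = if (i : ℕ) % 2 = 0 ∧ u ≤ 2 * (1 - ω) / n then x0 else x1 := by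
  have hn' : (0 : ℝ) < n := by exact_mod_cast hn
  have hscale : (i : ℝ) / n + u = (i + n * u) / n := by field_simp
  have hv : 0 < n * u ∧ n * u ≤ 1 := by
    obtain ⟨h0, h1⟩ := hu
    exact ⟨by positivity, by rwa [le_div_iff₀ hn', mul_comm] at h1⟩
  have hthr : u ≤ 2 * (1 - ω) / n ↔ n * u ≤ 2 * (1 - ω) := by
    rw [le_div_iff₀ hn', mul_comm]
  have hi0 : (0 : ℝ) ≤ i := by positivity
  rw [hscale]
  by_cases hi : (i : ℕ) % 2 = 0
  · by_cases hut : u ≤ 2 * (1 - ω) / n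
    · rw [if_pos ⟨hi, hut⟩, inverseCDF_div_eq_interleaved hn hw hD i
        (by rw [if_pos hi]; linarith) (by rw [if_pos hi]; linarith [hthr.1 hut]), hξ, if_pos hi]
    · have hlt : (i : ℕ) + 1 < n := by
        obtain ⟨m, hm⟩ := hne
        omega
      have hodd : ((i : ℕ) + 1) % 2 ≠ 0 := by omega
      rw [if_neg (fun h => hut h.2), inverseCDF_div_eq_interleaved hn hw hD ⟨i + 1, hlt⟩ ?_ ?_,
        hξ, if_neg hodd]
      · rw [if_neg hodd]
        push_cast
        linarith [hthr.not.1 hut]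
      · rw [if_neg hodd]
        push_cast
        linarith
  · rw [if_neg (fun h => hi h.1), inverseCDF_div_eq_interleaved hn hw hD i
      (by rw [if_neg hi]; linarith) (by rw [if_neg hi]; linarith), hξ, if_neg hi]

end Interleaved

theorem systematic_variance_interleaved_general
    {X : Type*} {Ω : Type*} [MeasurableSpace Ω]
    (P : Measure Ω) [IsProbabilityMeasure P]
    (n : ℕ) (hn : 0 < n) (hneven : Even n)
    (x0 x1 : X) (f : X → ℝ)
    (ω : ℝ) (hω1 : 1 / 2 ≤ ω) (hω2 : ω < 1)
    (ξ : Fin n → X) (hξ : ∀ i, ξ i = if (i : ℕ) % 2 = 0 then x0 else x1)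
    (w : Fin n → ℝ)
    (hwdef : ∀ i, w i = if (i : ℕ) % 2 = 0 then 2 * (1 - ω) / n else 2 * ω / n)
    (Dinv : ℝ → Fin n)
    (hDinv : ∀ (u : ℝ) (i : Fin n),
      u ∈ Set.Ioc (∑ j ∈ Finset.Iio i, w j) (∑ j ∈ Finset.Iic i, w j) → Dinv u = i)
    (U : Ω → ℝ) (hUmeas : Measurable U)
    (hUlaw : Measure.map U P
      = (n : ENNReal) • volume.restrict (Set.Ioc (0 : ℝ) (1 / n))) :
    variance (fun a => (1 / (n : ℝ)) *
        ∑ i : Fin n, f (ξ (Dinv (((i : ℕ) : ℝ) / n + U a)))) P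
      = (ω - 1 / 2) * (1 - ω) * (f x1 - f x0) ^ 2 := by
  have hae : (fun a => (1 / (n : ℝ)) * ∑ i : Fin n, f (ξ (Dinv (((i : ℕ) : ℝ) / n + U a))))
      =ᵐ[P] fun a => if a ∈ {a | U a ≤ 2 * (1 - ω) / n} then (f x0 + f x1) / 2 else f x1 := by
    filter_upwards [ae_mem_Ioc_of_map_eq hUmeas hUlaw] with a ha
    simp only [selected_particle_interleaved hn hneven hω1 hξ hwdef hDinv ha, apply_ite f, ite_and,
      average_ite_mod_two hn hneven]
    split_ifs <;> ring
  have ht0 : 0 ≤ 2 * (1 - ω) / n := by positivity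
  have ht1 : 2 * (1 - ω) / n ≤ 1 / n := by gcongr; linarith
  rw [variance_congr hae, variance_ite_mem (s := {a | U a ≤ 2 * (1 - ω) / n})
    (hUmeas measurableSet_Iic), measureReal_setOf_le_of_map_eq hUmeas hUlaw ht0 ht1]
  field_simp
  ring

/-- systematic resampling in the interleaved two-value configuration.
Particles with 0-based index `i` are `x0` for `i` even (paper's odd 1-based indices) and
`x1` for `i` odd, carrying weights `2(1−ω)/n` and `2ω/n` respectively, `1/2 ≤ ω < 1`.
A single uniform `U` on `(0, 1/n]` gives `U^i = (i−1)/n + U`, and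
`Var[(1/n) ∑_i f(ξ_{Dinv(U^i)})] = (ω − 1/2)(1 − ω)(f(x1) − f(x0))²`,
a quantity that does not depend on `n`. -/
theorem systematic_variance_interleaved
    {X : Type*} [MeasurableSpace X] {Ω : Type*} [MeasurableSpace Ω]
    (P : Measure Ω) [IsProbabilityMeasure P]
    (n : ℕ) (hn : 0 < n) (hneven : Even n)
    (x0 x1 : X) (f : X → ℝ)
    (ω : ℝ) (hω1 : 1 / 2 ≤ ω) (hω2 : ω < 1)
    (ξ : Fin n → X) (hξ : ∀ i, ξ i = if (i : ℕ) % 2 = 0 then x0 else x1)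
    (w : Fin n → ℝ)
    (hwdef : ∀ i, w i = if (i : ℕ) % 2 = 0 then 2 * (1 - ω) / n else 2 * ω / n)
    (Dinv : ℝ → Fin n) (hDmeas : Measurable Dinv)
    (hDinv : ∀ (u : ℝ) (i : Fin n),
      u ∈ Set.Ioc (∑ j ∈ Finset.Iio i, w j) (∑ j ∈ Finset.Iic i, w j) → Dinv u = i)
    (U : Ω → ℝ) (hUmeas : Measurable U)
    (hUlaw : Measure.map U P
      = (n : ENNReal) • volume.restrict (Set.Ioc (0 : ℝ) (1 / n))) :
    variance (fun a => (1 / (n : ℝ)) *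
        ∑ i : Fin n, f (ξ (Dinv (((i : ℕ) : ℝ) / n + U a)))) P
      = (ω - 1 / 2) * (1 - ω) * (f x1 - f x0) ^ 2 :=
  systematic_variance_interleaved_general P n hn hneven x0 x1 f ω hω1 hω2 ξ hξ w hwdef Dinv hDinv U
    hUmeas hUlaw
end

section
/- (Corollary 1.) Let X be a measurable space with σ-finite reference measure λ, ν and μ probability densities on X with g = μ/ν bounded from above, and assume μ( { x : α g(x) ∈ ℕ } ) = 0 for a fixed α ∈ (0,∞). For each m, let ξ^{m,1},…,ξ^{m,m} be X-valued random variables such that for every bounded measurable h, (1/m) Σ_{i=1}^m h(ξ^{m,i}) → ν(h) in probability, set ω^{m,i} = g(ξ^{m,i}) / Σ_{j=1}^m g(ξ^{m,j}), and let n = n(m) → ∞ with n/m → α. Then for every bounded measurable f : X → ℝ, n times the conditional variance of residual resampling, namely Σ_{i=1}^m ( ω^{m,i} − ⌊n ω^{m,i}⌋/n ) f(ξ^{m,i})² − ( Σ_{i=1}^m ( ω^{m,i} − ⌊n ω^{m,i}⌋/n ) f(ξ^{m,i}) )² / ( 1 − Σ_{i=1}^m ⌊n ω^{m,i}⌋/n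 ), converges in probability to κ(f) = ν{ ( μ/ν − (1/α)⌊α μ/ν⌋ ) f² } − ( ν{ ( μ/ν − (1/α)⌊α μ/ν⌋ ) f } )² / ( 1 − ν{ (1/α)⌊α μ/ν⌋ } ). -/
open MeasureTheory ProbabilityTheory Filter Finset

open scoped Topology

/-!
With `ρ = ν λ` and `g = μ/ν`, the residual weights satisfy `n ω^{m,i} = B_m g(ξ^{m,i})` with the
random level `B_m = n / ∑ⱼ g(ξ^{m,j}) → α` in probability. Since `t ↦ ⌊t g⌋` is monotone,
`(1/m) ∑ᵢ ⌊B_m g(ξ^{m,i})⌋ φ(ξ^{m,i})` is squeezed between the empirical means at the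
deterministic levels `α ± δ`, which converge by the law of large numbers to `ρ{⌊(α ± δ) g⌋ φ}`.
The support condition makes `t ↦ ⌊t g⌋` continuous at `α` for `ρ`-a.e. point, so these bounds
tend to `ρ{⌊α g⌋ φ}` as `δ → 0` by dominated convergence; it also makes `ρ{⌊α g⌋} < α`, so the
limiting denominator does not vanish and the continuous mapping theorem applies.
-/

section ConvergenceInMeasure

variable {ι Ω : Type*} [MeasurableSpace Ω] {P : Measure Ω} {l : Filter ι}

lemma tendsto_measure_zero_of_subset {s t : ι → Set Ω} (hst : ∀ i, s i ⊆ t i)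
    (ht : Tendsto (fun i => P (t i)) l (𝓝 0)) : Tendsto (fun i => P (s i)) l (𝓝 0) :=
  tendsto_of_tendsto_of_tendsto_of_le_of_le tendsto_const_nhds ht (fun _ => zero_le)
    fun i => measure_mono (hst i)

lemma tendsto_measure_union_zero {s t : ι → Set Ω} (hs : Tendsto (fun i => P (s i)) l (𝓝 0))
    (ht : Tendsto (fun i => P (t i)) l (𝓝 0)) : Tendsto (fun i => P (s i ∪ t i)) l (𝓝 0) :=
  tendsto_of_tendsto_of_tendsto_of_le_of_le tendsto_const_nhds (by simpa using hs.add ht)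
    (fun _ => zero_le) fun _ => measure_union_le _ _

lemma tendstoInMeasure_const {E : Type*} [PseudoMetricSpace E] {r : ι → E} {c : E}
    (h : Tendsto r l (𝓝 c)) : TendstoInMeasure P (fun i _ => r i) l (fun _ => c) := by
  rw [tendstoInMeasure_iff_dist]
  intro ε hε
  refine tendsto_const_nhds.congr' ?_
  filter_upwards [Metric.tendsto_nhds.mp h ε hε] with i hi
  simp [not_le.mpr hi]

lemma TendstoInMeasure.comp₂ {E F G : Type*} [PseudoMetricSpace E] [PseudoMetricSpace F]
    [PseudoMetricSpace G] {u : ι → Ω → E} {v : ι → Ω → F} {c : E} {d : F}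
    (hu : TendstoInMeasure P u l (fun _ => c)) (hv : TendstoInMeasure P v l (fun _ => d))
    (φ : E → F → G) (hφ : ContinuousAt (Function.uncurry φ) (c, d)) :
    TendstoInMeasure P (fun i a => φ (u i a) (v i a)) l (fun _ => φ c d) := by
  rw [tendstoInMeasure_iff_dist] at hu hv ⊢
  intro ε hε
  obtain ⟨δ, hδ, hball⟩ := Metric.continuousAt_iff.mp hφ ε hε
  refine tendsto_measure_zero_of_subset (fun i a ha => ?_)
    (tendsto_measure_union_zero (hu δ hδ) (hv δ hδ))
  by_contra hnot
  simp only [Set.mem_union, Set.mem_ofPred_eq, not_or, not_le] at ha hnot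
  exact ha.not_gt (hball (x := (u i a, v i a)) (by rw [Prod.dist_eq]; exact max_lt hnot.1 hnot.2))

lemma tendstoInMeasure_of_forall_squeeze {Y : ι → Ω → ℝ} {c : ℝ}
    (h : ∀ ε > 0, ∃ (L U : ι → Ω → ℝ) (a b : ℝ), c - ε < a ∧ b < c + ε ∧
      TendstoInMeasure P L l (fun _ => a) ∧ TendstoInMeasure P U l (fun _ => b) ∧
      Tendsto (fun i => P {ω | ¬ (L i ω ≤ Y i ω ∧ Y i ω ≤ U i ω)}) l (𝓝 0)) :
    TendstoInMeasure P Y l (fun _ => c) := by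
  rw [tendstoInMeasure_iff_dist]
  intro ε hε
  obtain ⟨L, U, a, b, ha, hb, hL, hU, hout⟩ := h (ε / 2) (half_pos hε)
  rw [tendstoInMeasure_iff_dist] at hL hU
  refine tendsto_measure_zero_of_subset (fun i ω hω => ?_) (tendsto_measure_union_zero hout
    (tendsto_measure_union_zero (hL _ (half_pos hε)) (hU _ (half_pos hε))))
  by_contra hnot
  simp only [Set.mem_union, Set.mem_ofPred_eq, not_or, not_not, not_le, Real.dist_eq] at hω hnot
  obtain ⟨⟨hLY, hYU⟩, hLa, hUb⟩ := hnot
  have := abs_sub_lt_iff.mp hLa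
  have := abs_sub_lt_iff.mp hUb
  exact hω.not_gt (abs_sub_lt_iff.mpr ⟨by linarith, by linarith⟩)

end ConvergenceInMeasure

lemma abs_intFloor_le (y : ℝ) : |(⌊y⌋ : ℝ)| ≤ |y| + 1 := by
  rw [abs_le]
  constructor
  · linarith [Int.sub_one_lt_floor y, neg_abs_le y]
  · linarith [Int.floor_le y, le_abs_self y]

section BoundedFunctions

variable {X : Type*} {f g : X → ℝ}

lemma exists_abs_mul_le (hf : ∃ C, ∀ x, |f x| ≤ C) (hg : ∃ C, ∀ x, |g x| ≤ C) :
    ∃ C, ∀ x, |f x * g x| ≤ C := by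
  obtain ⟨Cf, hCf⟩ := hf
  obtain ⟨Cg, hCg⟩ := hg
  exact ⟨Cf * Cg, fun x => abs_mul (f x) (g x) ▸
    mul_le_mul (hCf x) (hCg x) (abs_nonneg _) ((abs_nonneg _).trans (hCf x))⟩

lemma exists_abs_intFloor_mul_le (hg : ∃ C, ∀ x, |g x| ≤ C) (t : ℝ) :
    ∃ C, ∀ x, |(⌊t * g x⌋ : ℝ)| ≤ C := by
  obtain ⟨C, hC⟩ := hg
  refine ⟨|t| * C + 1, fun x => (abs_intFloor_le _).trans ?_⟩
  rw [abs_mul]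
  gcongr
  exact hC x

lemma exists_abs_max_zero_le (hf : ∃ C, ∀ x, |f x| ≤ C) : ∃ C, ∀ x, |max (f x) 0| ≤ C := by
  obtain ⟨C, hC⟩ := hf
  refine ⟨C, fun x => ?_⟩
  rw [abs_of_nonneg (le_max_right _ _)]
  exact max_le ((le_abs_self _).trans (hC x)) ((abs_nonneg _).trans (hC x))

end BoundedFunctions

section IntFloor

variable {X : Type*} [MeasurableSpace X] {ρ : Measure X} {g φ : X → ℝ} {α : ℝ}

lemma Measurable.intFloor_const_mul (hg : Measurable g) (t : ℝ) :
    Measurable fun x => (⌊t * g x⌋ : ℝ) :=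
  measurable_from_top.comp (hg.const_mul t).floor

lemma integrable_of_exists_abs_le [IsFiniteMeasure ρ] (hφ : Measurable φ)
    (hφb : ∃ C, ∀ x, |φ x| ≤ C) : Integrable φ ρ := by
  obtain ⟨C, hC⟩ := hφb
  exact .of_bound hφ.aestronglyMeasurable C (ae_of_all _ hC)

lemma continuousAt_intFloor_mul_const {y : ℝ} (hy : ∀ k : ℤ, α * y = k → y = 0) :
    ContinuousAt (fun t : ℝ => (⌊t * y⌋ : ℝ)) α := by
  rcases eq_or_ne y 0 with rfl | hy0
  · simpa using continuousAt_const
  have hlt : (⌊α * y⌋ : ℝ) < α * y :=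
    (Int.floor_le _).lt_of_ne fun h => hy0 (hy _ h.symm)
  have hfloor : ContinuousAt (fun s : ℝ => (⌊s⌋ : ℝ)) (α * y) :=
    (continuousOn_floor ⌊α * y⌋).continuousAt (Ico_mem_nhds hlt (Int.lt_floor_add_one _))
  exact ContinuousAt.comp (f := fun t : ℝ => t * y) hfloor (continuous_mul_const y).continuousAt

lemma continuousAt_integral_intFloor_mul [IsFiniteMeasure ρ] (hg : Measurable g)
    (hgb : ∃ C, ∀ x, |g x| ≤ C) (hφ : Measurable φ) (hφb : ∃ C, ∀ x, |φ x| ≤ C)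
    (hae : ∀ᵐ x ∂ρ, ∀ k : ℤ, α * g x = k → g x = 0) :
    ContinuousAt (fun t => ∫ x, (⌊t * g x⌋ : ℝ) * φ x ∂ρ) α := by
  obtain ⟨Cg, hCg⟩ := hgb
  obtain ⟨Cφ, hCφ⟩ := hφb
  refine continuousAt_of_dominated (bound := fun _ => ((|α| + 1) * Cg + 1) * Cφ)
    (Eventually.of_forall fun t => ((hg.intFloor_const_mul t).mul hφ).aestronglyMeasurable)
    ?_ (integrable_const _) ?_
  · filter_upwards [Metric.ball_mem_nhds α one_pos] with t ht
    have ht : |t| ≤ |α| + 1 := by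
      have := abs_sub_abs_le_abs_sub t α
      rw [Metric.mem_ball, Real.dist_eq] at ht
      linarith
    refine ae_of_all _ fun x => ?_
    have hfloor : |(⌊t * g x⌋ : ℝ)| ≤ (|α| + 1) * Cg + 1 := by
      have := abs_intFloor_le (t * g x)
      rw [abs_mul] at this
      nlinarith [abs_nonneg t, abs_nonneg (g x), hCg x]
    rw [Real.norm_eq_abs, abs_mul]
    exact mul_le_mul hfloor (hCφ x) (abs_nonneg _) ((abs_nonneg _).trans hfloor)
  · filter_upwards [hae] with x hx
    exact (continuousAt_intFloor_mul_const hx).mul continuousAt_const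

lemma integral_intFloor_mul_lt [IsFiniteMeasure ρ] (hg : Measurable g)
    (hgb : ∃ C, ∀ x, |g x| ≤ C) (hae : ∀ᵐ x ∂ρ, ∀ k : ℤ, α * g x = k → g x = 0)
    (hg0 : ¬ g =ᵐ[ρ] 0) : ∫ x, (⌊α * g x⌋ : ℝ) ∂ρ < ∫ x, α * g x ∂ρ := by
  obtain ⟨C, hC⟩ := hgb
  have hint : Integrable (fun x => α * g x) ρ :=
    integrable_of_exists_abs_le (hg.const_mul α) ⟨|α| * C, fun x => by
      rw [abs_mul]; exact mul_le_mul_of_nonneg_left (hC x) (abs_nonneg α)⟩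
  have hint' : Integrable (fun x => (⌊α * g x⌋ : ℝ)) ρ :=
    integrable_of_exists_abs_le (hg.intFloor_const_mul α) (exists_abs_intFloor_mul_le ⟨C, hC⟩ α)
  have hfract : ∀ x, 0 ≤ α * g x - ⌊α * g x⌋ := fun x => sub_nonneg.2 (Int.floor_le _)
  by_contra hle
  have hzero : (fun x => α * g x - ⌊α * g x⌋) =ᵐ[ρ] 0 := by
    rw [← integral_eq_zero_iff_of_nonneg hfract (hint.sub hint')]
    refine le_antisymm ?_ (integral_nonneg hfract)
    rw [integral_sub hint hint']
    linarith
  refine hg0 ?_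
  filter_upwards [hzero, hae] with x hx hx'
  exact hx' _ (sub_eq_zero.1 hx)

end IntFloor

section EmpiricalMeans

variable {Ω X : Type*} {ξ : (m : ℕ) → Fin m → Ω → X}

noncomputable def empiricalMean (ξ : (m : ℕ) → Fin m → Ω → X) (h : X → ℝ) (m : ℕ) (a : Ω) : ℝ :=
  1 / (m : ℝ) * ∑ i, h (ξ m i a)

lemma empiricalMean_mono {h₁ h₂ : X → ℝ} (h : ∀ x, h₁ x ≤ h₂ x) (m : ℕ) (a : Ω) :
    empiricalMean ξ h₁ m a ≤ empiricalMean ξ h₂ m a :=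
  mul_le_mul_of_nonneg_left (sum_le_sum fun i _ => h _) (by positivity)

lemma empiricalMean_sub (h₁ h₂ : X → ℝ) (m : ℕ) (a : Ω) :
    empiricalMean ξ (fun x => h₁ x - h₂ x) m a =
      empiricalMean ξ h₁ m a - empiricalMean ξ h₂ m a := by
  simp only [empiricalMean, sum_sub_distrib, mul_sub]

variable [MeasurableSpace Ω] [MeasurableSpace X] {P : Measure Ω} {ρ : Measure X}
  {g φ : X → ℝ} {α : ℝ}

def EmpiricalMeansTendsto (P : Measure Ω) (ξ : (m : ℕ) → Fin m → Ω → X) (ρ : Measure X) : Prop :=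
  ∀ h : X → ℝ, Measurable h → (∃ C, ∀ x, |h x| ≤ C) →
    TendstoInMeasure P (empiricalMean ξ h) atTop (fun _ => ∫ x, h x ∂ρ)

variable [IsFiniteMeasure ρ]

lemma tendstoInMeasure_empiricalMean_intFloor_mul_of_nonneg (hξ : EmpiricalMeansTendsto P ξ ρ)
    {B : ℕ → Ω → ℝ} (hB : TendstoInMeasure P B atTop (fun _ => α))
    (hg : Measurable g) (hg0 : ∀ x, 0 ≤ g x) (hgb : ∃ C, ∀ x, |g x| ≤ C)
    (hφ : Measurable φ) (hφ0 : ∀ x, 0 ≤ φ x) (hφb : ∃ C, ∀ x, |φ x| ≤ C)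
    (hae : ∀ᵐ x ∂ρ, ∀ k : ℤ, α * g x = k → g x = 0) :
    TendstoInMeasure P (fun m a => empiricalMean ξ (fun x => (⌊B m a * g x⌋ : ℝ) * φ x) m a)
      atTop (fun _ => ∫ x, (⌊α * g x⌋ : ℝ) * φ x ∂ρ) := by
  have hmono {s t : ℝ} (hst : s ≤ t) (x : X) : (⌊s * g x⌋ : ℝ) * φ x ≤ ⌊t * g x⌋ * φ x :=
    mul_le_mul_of_nonneg_right
      (Int.cast_le.2 (Int.floor_le_floor (mul_le_mul_of_nonneg_right hst (hg0 x)))) (hφ0 x)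
  have hmean (t : ℝ) : TendstoInMeasure P (empiricalMean ξ fun x => (⌊t * g x⌋ : ℝ) * φ x)
      atTop (fun _ => ∫ x, (⌊t * g x⌋ : ℝ) * φ x ∂ρ) :=
    hξ _ ((hg.intFloor_const_mul t).mul hφ)
      (exists_abs_mul_le (exists_abs_intFloor_mul_le hgb t) hφb)
  refine tendstoInMeasure_of_forall_squeeze fun ε hε => ?_
  obtain ⟨δ, hδ, hcont⟩ := Metric.continuousAt_iff.mp
    (continuousAt_integral_intFloor_mul hg hgb hφ hφb hae) ε hε
  have hclose {t : ℝ} (ht : |t - α| < δ) :=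
    abs_sub_lt_iff.mp (Real.dist_eq _ _ ▸ hcont (x := t) (Real.dist_eq t α ▸ ht))
  refine ⟨_, _, _, _, ?_, ?_, hmean (α - δ / 2), hmean (α + δ / 2), ?_⟩
  · have := hclose (t := α - δ / 2) (by rw [abs_lt]; constructor <;> linarith)
    linarith
  · have := hclose (t := α + δ / 2) (by rw [abs_lt]; constructor <;> linarith)
    linarith
  · rw [tendstoInMeasure_iff_dist] at hB
    refine tendsto_measure_zero_of_subset (fun m a ha => ?_) (hB (δ / 2) (half_pos hδ))
    by_contra hnot
    simp only [Set.mem_ofPred_eq, not_le, Real.dist_eq] at ha hnot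
    obtain ⟨h₁, h₂⟩ := abs_sub_lt_iff.mp hnot
    exact ha ⟨empiricalMean_mono (hmono (by linarith)) m a,
      empiricalMean_mono (hmono (by linarith)) m a⟩

lemma tendstoInMeasure_empiricalMean_intFloor_mul (hξ : EmpiricalMeansTendsto P ξ ρ)
    {B : ℕ → Ω → ℝ} (hB : TendstoInMeasure P B atTop (fun _ => α))
    (hg : Measurable g) (hg0 : ∀ x, 0 ≤ g x) (hgb : ∃ C, ∀ x, |g x| ≤ C)
    (hφ : Measurable φ) (hφb : ∃ C, ∀ x, |φ x| ≤ C)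
    (hae : ∀ᵐ x ∂ρ, ∀ k : ℤ, α * g x = k → g x = 0) :
    TendstoInMeasure P (fun m a => empiricalMean ξ (fun x => (⌊B m a * g x⌋ : ℝ) * φ x) m a)
      atTop (fun _ => ∫ x, (⌊α * g x⌋ : ℝ) * φ x ∂ρ) := by
  have hpart {ψ : X → ℝ} (hψ : Measurable ψ) (hψb : ∃ C, ∀ x, |ψ x| ≤ C) :=
    tendstoInMeasure_empiricalMean_intFloor_mul_of_nonneg hξ hB hg hg0 hgb
      (hψ.max measurable_const) (fun x => le_max_right _ 0) (exists_abs_max_zero_le hψb) hae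
  have hintegrable {ψ : X → ℝ} (hψ : Measurable ψ) (hψb : ∃ C, ∀ x, |ψ x| ≤ C) :
      Integrable (fun x => (⌊α * g x⌋ : ℝ) * max (ψ x) 0) ρ :=
    integrable_of_exists_abs_le ((hg.intFloor_const_mul α).mul (hψ.max measurable_const))
      (exists_abs_mul_le (exists_abs_intFloor_mul_le hgb α) (exists_abs_max_zero_le hψb))
  have hφb' : ∃ C, ∀ x, |-φ x| ≤ C := by simpa only [abs_neg] using hφb
  have hdiff := TendstoInMeasure.comp₂ (hpart hφ hφb) (hpart hφ.neg hφb') (· - ·)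
    continuous_sub.continuousAt
  rw [← integral_sub (hintegrable hφ hφb) (hintegrable hφ.neg hφb')] at hdiff
  simpa only [← empiricalMean_sub, ← mul_sub, Pi.neg_apply, max_zero_sub_max_neg_zero_eq_self]
    using hdiff

end EmpiricalMeans

section ImportanceWeights

variable {Ω X : Type*} [MeasurableSpace Ω] [MeasurableSpace X] {P : Measure Ω} {ρ : Measure X}
  {ξ : (m : ℕ) → Fin m → Ω → X} {g φ : X → ℝ} {α : ℝ}

/-- The weight `ω^{m,i}` of the paper. -/
noncomputable def importanceWeight (g : X → ℝ) (ξ : (m : ℕ) → Fin m → Ω → X) (m : ℕ) (i : Fin m)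
    (a : Ω) : ℝ :=
  g (ξ m i a) / ∑ j, g (ξ m j a)

omit [MeasurableSpace Ω] [MeasurableSpace X] in
lemma sum_importanceWeight_mul (m : ℕ) (a : Ω) :
    ∑ i, importanceWeight g ξ m i a * φ (ξ m i a) =
      empiricalMean ξ (fun x => g x * φ x) m a / empiricalMean ξ g m a := by
  rcases Nat.eq_zero_or_pos m with rfl | hm
  · simp [empiricalMean]
  rw [empiricalMean, empiricalMean, mul_div_mul_left _ _ (by positivity), sum_div]
  simp only [importanceWeight, div_mul_eq_mul_div]

omit [MeasurableSpace Ω] [MeasurableSpace X] in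
lemma sum_intFloor_importanceWeight_mul (n m : ℕ) (a : Ω) :
    ∑ i, (⌊n * importanceWeight g ξ m i a⌋ : ℝ) / n * φ (ξ m i a) =
      m / n * empiricalMean ξ
        (fun x => (⌊(n / ∑ j, g (ξ m j a)) * g x⌋ : ℝ) * φ x) m a := by
  rcases Nat.eq_zero_or_pos m with rfl | hm
  · simp
  have hm' : (m : ℝ) / n * (1 / m) = 1 / n := by field_simp
  rw [empiricalMean, ← mul_assoc, hm', mul_sum]
  simp only [importanceWeight, mul_div_assoc', div_mul_eq_mul_div, one_mul]

lemma tendstoInMeasure_natCast_div_sum (hξ : EmpiricalMeansTendsto P ξ ρ) {n : ℕ → ℕ}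
    (hnm : Tendsto (fun m : ℕ => (n m : ℝ) / m) atTop (𝓝 α)) (hg : Measurable g)
    (hgb : ∃ C, ∀ x, |g x| ≤ C) (hg1 : ∫ x, g x ∂ρ ≠ 0) :
    TendstoInMeasure P (fun m a => (n m : ℝ) / ∑ j, g (ξ m j a)) atTop
      (fun _ => α / ∫ x, g x ∂ρ) := by
  have hratio := TendstoInMeasure.comp₂ (tendstoInMeasure_const hnm) (hξ g hg hgb) (· / ·)
    (continuousAt_fst.div continuousAt_snd hg1)
  refine hratio.congr_left fun m => ae_of_all _ fun a => ?_
  rcases Nat.eq_zero_or_pos m with rfl | hm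
  · simp
  simp only [empiricalMean]
  field_simp

lemma tendstoInMeasure_sum_importanceWeight_mul (hξ : EmpiricalMeansTendsto P ξ ρ)
    (hg : Measurable g) (hgb : ∃ C, ∀ x, |g x| ≤ C) (hg1 : ∫ x, g x ∂ρ ≠ 0)
    (hφ : Measurable φ) (hφb : ∃ C, ∀ x, |φ x| ≤ C) :
    TendstoInMeasure P (fun m a => ∑ i, importanceWeight g ξ m i a * φ (ξ m i a)) atTop
      (fun _ => (∫ x, g x * φ x ∂ρ) / ∫ x, g x ∂ρ) := by
  simp only [sum_importanceWeight_mul]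
  exact TendstoInMeasure.comp₂ (hξ _ (hg.mul hφ) (exists_abs_mul_le hgb hφb)) (hξ g hg hgb)
    (· / ·) (continuousAt_fst.div continuousAt_snd hg1)

variable [IsFiniteMeasure ρ]

lemma tendstoInMeasure_sum_intFloor_importanceWeight_mul (hξ : EmpiricalMeansTendsto P ξ ρ)
    {n : ℕ → ℕ} (hnm : Tendsto (fun m : ℕ => (n m : ℝ) / m) atTop (𝓝 α)) (hα : α ≠ 0)
    (hg : Measurable g) (hg0 : ∀ x, 0 ≤ g x) (hgb : ∃ C, ∀ x, |g x| ≤ C) (hg1 : ∫ x, g x ∂ρ = 1)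
    (hφ : Measurable φ) (hφb : ∃ C, ∀ x, |φ x| ≤ C)
    (hae : ∀ᵐ x ∂ρ, ∀ k : ℤ, α * g x = k → g x = 0) :
    TendstoInMeasure P
      (fun m a => ∑ i, (⌊n m * importanceWeight g ξ m i a⌋ : ℝ) / n m * φ (ξ m i a)) atTop
      (fun _ => ∫ x, 1 / α * ⌊α * g x⌋ * φ x ∂ρ) := by
  have hB := tendstoInMeasure_natCast_div_sum hξ hnm hg hgb (hg1 ▸ one_ne_zero)
  rw [hg1, div_one] at hB
  have hmn : Tendsto (fun m : ℕ => (m : ℝ) / n m) atTop (𝓝 α⁻¹) := by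
    simpa only [inv_div] using hnm.inv₀ hα
  have hlim := TendstoInMeasure.comp₂ (tendstoInMeasure_const hmn)
    (tendstoInMeasure_empiricalMean_intFloor_mul hξ hB hg hg0 hgb hφ hφb hae) (· * ·)
    continuous_mul.continuousAt
  simp only [sum_intFloor_importanceWeight_mul]
  simpa only [mul_assoc, integral_const_mul, one_div] using hlim

lemma tendstoInMeasure_sum_residual_mul (hξ : EmpiricalMeansTendsto P ξ ρ)
    {n : ℕ → ℕ} (hnm : Tendsto (fun m : ℕ => (n m : ℝ) / m) atTop (𝓝 α)) (hα : α ≠ 0)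
    (hg : Measurable g) (hg0 : ∀ x, 0 ≤ g x) (hgb : ∃ C, ∀ x, |g x| ≤ C) (hg1 : ∫ x, g x ∂ρ = 1)
    (hφ : Measurable φ) (hφb : ∃ C, ∀ x, |φ x| ≤ C)
    (hae : ∀ᵐ x ∂ρ, ∀ k : ℤ, α * g x = k → g x = 0) :
    TendstoInMeasure P
      (fun m a => ∑ i, (importanceWeight g ξ m i a
        - (⌊n m * importanceWeight g ξ m i a⌋ : ℝ) / n m) * φ (ξ m i a)) atTop
      (fun _ => ∫ x, (g x - 1 / α * ⌊α * g x⌋) * φ x ∂ρ) := by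
  have hweight := tendstoInMeasure_sum_importanceWeight_mul hξ hg hgb (hg1 ▸ one_ne_zero) hφ hφb
  rw [hg1, div_one] at hweight
  have hdiff := TendstoInMeasure.comp₂ hweight
    (tendstoInMeasure_sum_intFloor_importanceWeight_mul hξ hnm hα hg hg0 hgb hg1 hφ hφb hae)
    (· - ·) continuous_sub.continuousAt
  have hint₁ : Integrable (fun x => g x * φ x) ρ :=
    integrable_of_exists_abs_le (hg.mul hφ) (exists_abs_mul_le hgb hφb)
  have hint₂ : Integrable (fun x => 1 / α * ⌊α * g x⌋ * φ x) ρ :=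
    integrable_of_exists_abs_le (((hg.intFloor_const_mul α).const_mul _).mul hφ)
      (exists_abs_mul_le (exists_abs_mul_le ⟨|1 / α|, fun _ => le_rfl⟩
        (exists_abs_intFloor_mul_le hgb α)) hφb)
  rw [← integral_sub hint₁ hint₂] at hdiff
  simpa only [sub_mul, sum_sub_distrib] using hdiff

theorem tendstoInMeasure_residual_variance (hξ : EmpiricalMeansTendsto P ξ ρ) {n : ℕ → ℕ}
    (hnm : Tendsto (fun m : ℕ => (n m : ℝ) / m) atTop (𝓝 α)) (hα : 0 < α)
    (hg : Measurable g) (hg0 : ∀ x, 0 ≤ g x) (hgb : ∃ C, ∀ x, |g x| ≤ C) (hg1 : ∫ x, g x ∂ρ = 1)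
    (hae : ∀ᵐ x ∂ρ, ∀ k : ℤ, α * g x = k → g x = 0)
    {f : X → ℝ} (hf : Measurable f) (hfb : ∃ C, ∀ x, |f x| ≤ C) :
    TendstoInMeasure P
      (fun m a =>
        (∑ i, (importanceWeight g ξ m i a
          - (⌊n m * importanceWeight g ξ m i a⌋ : ℝ) / n m) * f (ξ m i a) ^ 2)
        - (∑ i, (importanceWeight g ξ m i a
          - (⌊n m * importanceWeight g ξ m i a⌋ : ℝ) / n m) * f (ξ m i a)) ^ 2
          / (1 - ∑ i, (⌊n m * importanceWeight g ξ m i a⌋ : ℝ) / n m)) atTop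
      (fun _ =>
        (∫ x, (g x - 1 / α * ⌊α * g x⌋) * f x ^ 2 ∂ρ)
        - (∫ x, (g x - 1 / α * ⌊α * g x⌋) * f x ∂ρ) ^ 2 / (1 - ∫ x, 1 / α * ⌊α * g x⌋ ∂ρ)) := by
  have hres {φ : X → ℝ} (hφ : Measurable φ) (hφb : ∃ C, ∀ x, |φ x| ≤ C) :=
    tendstoInMeasure_sum_residual_mul hξ hnm hα.ne' hg hg0 hgb hg1 hφ hφb hae
  have hfloor := tendstoInMeasure_sum_intFloor_importanceWeight_mul (φ := fun _ => 1) hξ hnm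
    hα.ne' hg hg0 hgb hg1 measurable_const ⟨1, fun _ => by simp⟩ hae
  simp only [mul_one] at hfloor
  have hden_ne : 1 - ∫ x, 1 / α * ⌊α * g x⌋ ∂ρ ≠ 0 := by
    have hlt := integral_intFloor_mul_lt hg hgb hae fun h => by
      simp [integral_congr_ae h] at hg1
    rw [integral_const_mul, hg1, mul_one] at hlt
    rw [integral_const_mul, one_div, inv_mul_eq_div]
    exact (sub_pos.2 ((div_lt_one hα).2 hlt)).ne'
  have hf2b : ∃ C, ∀ x, |f x ^ 2| ≤ C := by simpa only [sq] using exists_abs_mul_le hfb hfb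
  exact TendstoInMeasure.comp₂ (hres (hf.pow_const 2) hf2b)
    (TendstoInMeasure.comp₂ (hres hf hfb) hfloor (fun u v => u ^ 2 / (1 - v))
      ((continuous_fst.pow 2).continuousAt.div (continuous_const.sub continuous_snd).continuousAt
        hden_ne)) (· - ·) continuous_sub.continuousAt

end ImportanceWeights

section Densities

variable {X : Type*} [MeasurableSpace X] {lam : Measure X} {ν μ : X → ℝ}

lemma integral_withDensity_ofReal (hν : Measurable ν) (hν0 : ∀ x, 0 ≤ ν x) (h : X → ℝ) :
    ∫ x, h x ∂lam.withDensity (fun x => ENNReal.ofReal (ν x)) = ∫ x, h x * ν x ∂lam := by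
  rw [integral_withDensity_eq_integral_toReal_smul hν.ennreal_ofReal
    (ae_of_all _ fun _ => ENNReal.ofReal_lt_top)]
  simp only [ENNReal.toReal_ofReal (hν0 _), smul_eq_mul, mul_comm]

lemma integral_div_withDensity_ofReal (hν : Measurable ν) (hν0 : ∀ x, 0 ≤ ν x)
    (hμν : ∀ᵐ x ∂lam, ν x = 0 → μ x = 0) :
    ∫ x, μ x / ν x ∂lam.withDensity (fun x => ENNReal.ofReal (ν x)) = ∫ x, μ x ∂lam := by
  rw [integral_withDensity_ofReal hν hν0]
  refine integral_congr_ae ?_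
  filter_upwards [hμν] with x hx
  rcases eq_or_ne (ν x) 0 with h0 | h0
  · simp [h0, hx h0]
  · exact div_mul_cancel₀ _ h0

lemma ae_imp_eq_zero_of_setIntegral_eq_zero {s : Set X} (hs : MeasurableSet s)
    (hμ0 : ∀ x, 0 ≤ μ x) (hμ : Integrable μ lam) (h : ∫ x in s, μ x ∂lam = 0) :
    ∀ᵐ x ∂lam, x ∈ s → μ x = 0 :=
  (ae_restrict_iff' hs).mp
    ((setIntegral_eq_zero_iff_of_nonneg_ae (ae_of_all _ hμ0) hμ.integrableOn).mp h)

end Densities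

theorem residual_conditional_variance_limit_general
    {X : Type*} [MeasurableSpace X] (lam : Measure X)
    {Ω : Type*} [MeasurableSpace Ω] (P : Measure Ω)
    (nu mu : X → ℝ) (hnu_meas : Measurable nu) (hmu_meas : Measurable mu)
    (hnu_nonneg : ∀ x, 0 ≤ nu x) (hmu_nonneg : ∀ x, 0 ≤ mu x)
    (hnu_int : ∫ x, nu x ∂lam = 1) (hmu_int : ∫ x, mu x ∂lam = 1)
    (hg_bdd : ∃ C, ∀ x, mu x / nu x ≤ C)
    (ξ : (m : ℕ) → Fin m → Ω → X)
    (hLLN : ∀ h : X → ℝ, Measurable h → (∃ C, ∀ x, |h x| ≤ C) →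
      TendstoInMeasure P (fun (m : ℕ) (a : Ω) => (1 / (m : ℝ)) * ∑ i, h (ξ m i a)) atTop
        (fun _ => ∫ x, h x * nu x ∂lam))
    (n : ℕ → ℕ)
    (α : ℝ) (hα : 0 < α)
    (hnm : Tendsto (fun m : ℕ => (n m : ℝ) / m) atTop (nhds α))
    (hsupport : ∫ x in {x | ∃ k : ℕ, α * (mu x / nu x) = (k : ℝ)}, mu x ∂lam = 0)
    (f : X → ℝ) (hf : Measurable f) (hfb : ∃ C, ∀ x, |f x| ≤ C) :
    TendstoInMeasure P
      (fun (m : ℕ) (a : Ω) =>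
        (∑ i, (mu (ξ m i a) / nu (ξ m i a) / (∑ j, mu (ξ m j a) / nu (ξ m j a))
            - (⌊(n m : ℝ) * (mu (ξ m i a) / nu (ξ m i a)
                / ∑ j, mu (ξ m j a) / nu (ξ m j a))⌋ : ℝ) / (n m : ℝ)) * f (ξ m i a) ^ 2)
        - (∑ i, (mu (ξ m i a) / nu (ξ m i a) / (∑ j, mu (ξ m j a) / nu (ξ m j a))
            - (⌊(n m : ℝ) * (mu (ξ m i a) / nu (ξ m i a)
                / ∑ j, mu (ξ m j a) / nu (ξ m j a))⌋ : ℝ) / (n m : ℝ)) * f (ξ m i a)) ^ 2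
          / (1 - ∑ i, (⌊(n m : ℝ) * (mu (ξ m i a) / nu (ξ m i a)
                / ∑ j, mu (ξ m j a) / nu (ξ m j a))⌋ : ℝ) / (n m : ℝ))) atTop
      (fun _ =>
        (∫ x, (mu x / nu x - (1 / α) * (⌊α * (mu x / nu x)⌋ : ℝ)) * f x ^ 2 * nu x ∂lam)
        - (∫ x, (mu x / nu x - (1 / α) * (⌊α * (mu x / nu x)⌋ : ℝ)) * f x * nu x ∂lam) ^ 2
          / (1 - ∫ x, (1 / α) * (⌊α * (mu x / nu x)⌋ : ℝ) * nu x ∂lam)) := by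
  set g : X → ℝ := fun x => mu x / nu x
  have hρ (h : X → ℝ) := integral_withDensity_ofReal (lam := lam) hnu_meas hnu_nonneg h
  have : IsFiniteMeasure (lam.withDensity fun x => ENNReal.ofReal (nu x)) :=
    isFiniteMeasure_withDensity_ofReal (Integrable.of_integral_ne_zero (hnu_int ▸ one_ne_zero)).2
  have hg : Measurable g := hmu_meas.div hnu_meas
  have hg0 (x : X) : 0 ≤ g x := div_nonneg (hmu_nonneg x) (hnu_nonneg x)
  have hgb : ∃ C, ∀ x, |g x| ≤ C := by
    obtain ⟨C, hC⟩ := hg_bdd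
    exact ⟨C, fun x => (abs_of_nonneg (hg0 x)).trans_le (hC x)⟩
  have hE : MeasurableSet {x | ∃ k : ℕ, α * g x = k} := by
    simp only [Set.ofPred_exists]
    exact .iUnion fun k => measurableSet_eq_fun (hg.const_mul α) measurable_const
  have hmu_zero := ae_imp_eq_zero_of_setIntegral_eq_zero hE hmu_nonneg
    (Integrable.of_integral_ne_zero (hmu_int ▸ one_ne_zero)) hsupport
  have hae : ∀ᵐ x ∂lam.withDensity fun x => ENNReal.ofReal (nu x),
      ∀ k : ℤ, α * g x = k → g x = 0 := by
    refine (withDensity_absolutelyContinuous _ _).ae_le ?_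
    filter_upwards [hmu_zero] with x hx k hk
    obtain ⟨j, rfl⟩ := Int.eq_ofNat_of_zero_le
      (Int.cast_nonneg_iff.mp (hk ▸ mul_nonneg hα.le (hg0 x)))
    simp [g, hx ⟨j, by simpa using hk⟩]
  simp only [← hρ]
  refine tendstoInMeasure_residual_variance (fun h hh hhb => ?_) hnm hα hg hg0 hgb ?_ hae hf hfb
  · rw [hρ]
    exact hLLN h hh hhb
  · rw [integral_div_withDensity_ofReal hnu_meas hnu_nonneg, hmu_int]
    filter_upwards [hmu_zero] with x hx h0
    exact hx ⟨0, by simp [g, h0]⟩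

/-- Corollary 1: limit of `n` times the conditional variance of residual
resampling.  Under the support condition `μ({x : α g(x) ∈ ℕ}) = 0` (with `g = μ/ν`
bounded) and `n/m → α`, the rescaled conditional variance converges in probability to
`κ(f) = ν{(μ/ν − (1/α)⌊α μ/ν⌋) f²} − (ν{(μ/ν − (1/α)⌊α μ/ν⌋) f})² / (1 − ν{(1/α)⌊α μ/ν⌋})`. -/
theorem residual_conditional_variance_limit
    {X : Type*} [MeasurableSpace X] (lam : Measure X) [SigmaFinite lam]
    {Ω : Type*} [MeasurableSpace Ω] (P : Measure Ω) [IsProbabilityMeasure P]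
    (nu mu : X → ℝ) (hnu_meas : Measurable nu) (hmu_meas : Measurable mu)
    (hnu_nonneg : ∀ x, 0 ≤ nu x) (hmu_nonneg : ∀ x, 0 ≤ mu x)
    (hnu_int : ∫ x, nu x ∂lam = 1) (hmu_int : ∫ x, mu x ∂lam = 1)
    (hg_bdd : ∃ C, ∀ x, mu x / nu x ≤ C)
    (ξ : (m : ℕ) → Fin m → Ω → X) (hξ : ∀ m i, Measurable (ξ m i))
    (hLLN : ∀ h : X → ℝ, Measurable h → (∃ C, ∀ x, |h x| ≤ C) →
      TendstoInMeasure P (fun (m : ℕ) (a : Ω) => (1 / (m : ℝ)) * ∑ i, h (ξ m i a)) atTop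
        (fun _ => ∫ x, h x * nu x ∂lam))
    (n : ℕ → ℕ) (hn : Tendsto n atTop atTop)
    (α : ℝ) (hα : 0 < α)
    (hnm : Tendsto (fun m : ℕ => (n m : ℝ) / m) atTop (nhds α))
    (hsupport : ∫ x in {x | ∃ k : ℕ, α * (mu x / nu x) = (k : ℝ)}, mu x ∂lam = 0)
    (f : X → ℝ) (hf : Measurable f) (hfb : ∃ C, ∀ x, |f x| ≤ C) :
    TendstoInMeasure P
      (fun (m : ℕ) (a : Ω) =>
        (∑ i, (mu (ξ m i a) / nu (ξ m i a) / (∑ j, mu (ξ m j a) / nu (ξ m j a))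
            - (⌊(n m : ℝ) * (mu (ξ m i a) / nu (ξ m i a)
                / ∑ j, mu (ξ m j a) / nu (ξ m j a))⌋ : ℝ) / (n m : ℝ)) * f (ξ m i a) ^ 2)
        - (∑ i, (mu (ξ m i a) / nu (ξ m i a) / (∑ j, mu (ξ m j a) / nu (ξ m j a))
            - (⌊(n m : ℝ) * (mu (ξ m i a) / nu (ξ m i a)
                / ∑ j, mu (ξ m j a) / nu (ξ m j a))⌋ : ℝ) / (n m : ℝ)) * f (ξ m i a)) ^ 2
          / (1 - ∑ i, (⌊(n m : ℝ) * (mu (ξ m i a) / nu (ξ m i a)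
                / ∑ j, mu (ξ m j a) / nu (ξ m j a))⌋ : ℝ) / (n m : ℝ))) atTop
      (fun _ =>
        (∫ x, (mu x / nu x - (1 / α) * (⌊α * (mu x / nu x)⌋ : ℝ)) * f x ^ 2 * nu x ∂lam)
        - (∫ x, (mu x / nu x - (1 / α) * (⌊α * (mu x / nu x)⌋ : ℝ)) * f x * nu x ∂lam) ^ 2
          / (1 - ∫ x, (1 / α) * (⌊α * (mu x / nu x)⌋ : ℝ) * nu x ∂lam)) :=
  residual_conditional_variance_limit_general lam P nu mu hnu_meas hmu_meas hnu_nonneg hmu_nonneg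
    hnu_int hmu_int hg_bdd ξ hLLN n α hα hnm hsupport f hf hfb
end
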